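/- Along any solution of Hamilton's equations for H_sR in exponential coordinates with the momenta p₁,…,p₆ taking constant values a₁,…,a₆, the projection (x(t), y(t), p_x(t), p_y(t)) satisfies Hamilton's equations for the reduced Hamiltonian H_μ(p_x,p_y,x,y) = ½(p_x² + p_y² + φ_μ(x,y)) with φ_μ(x,y) = (a₁ + a₄x + a₆x²/2)² + (a₂ + a₅x + a₄y + a₆xy)² + (a₃ + a₅y + a₆y²/2)². -/

import Mathlib

/-- The subRiemannian Hamiltonian `H_sR` on `T*ℝ⁸` in exponential coordinates of the
second kind: positions `q = (x, y, θ₁, …, θ₆)`, momenta `p = (p_x, p_y, p₁, …, p₆)`. -/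
noncomputable def Hsr (q p : Fin 8 → ℝ) : ℝ :=
  (1 / 2) * ((p 0) ^ 2 + (p 1) ^ 2
    + (p 2 + q 0 * p 5 + (q 0) ^ 2 / 2 * p 7) ^ 2
    + (p 3 + q 1 * p 5 + q 0 * p 6 + q 0 * q 1 * p 7) ^ 2
    + (p 4 + q 1 * p 6 + (q 1) ^ 2 / 2 * p 7) ^ 2)

/-- The reduced Hamiltonian `H_μ(p_x,p_y,x,y) = ½(p_x² + p_y² + φ_μ(x,y))` with
`μ = (a₁,…,a₆) = (a 2, …, a 7)`. -/
noncomputable def Hmu (a : Fin 8 → ℝ) (x y px py : ℝ) : ℝ :=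
  (1 / 2) * (px ^ 2 + py ^ 2
    + (a 2 + x * a 5 + x ^ 2 / 2 * a 7) ^ 2
    + (a 3 + y * a 5 + x * a 6 + x * y * a 7) ^ 2
    + (a 4 + y * a 6 + y ^ 2 / 2 * a 7) ^ 2)

/-! The partial derivatives in Hamilton's equations are derivatives along coordinate slices,
and on slices that leave `p₁,…,p₆` at the values `a₁,…,a₆`, `H_sR` coincides with `H_μ`. -/

open Function

theorem fderiv_apply_single_eq_deriv_update {ι 𝕜 F : Type*} [Fintype ι] [DecidableEq ι]
    [NontriviallyNormedField 𝕜] [NormedAddCommGroup F] [NormedSpace 𝕜 F]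
    {f : (ι → 𝕜) → F} {x : ι → 𝕜} (hf : DifferentiableAt 𝕜 f x) (i : ι) :
    fderiv 𝕜 f x (Pi.single i 1) = deriv (fun w => f (update x i w)) (x i) := by
  have hf' : HasFDerivAt f (fderiv 𝕜 f x) (update x i (x i)) := by
    simpa using hf.hasFDerivAt
  exact (hf'.comp_hasDerivAt (x i) (hasDerivAt_update x i (x i))).deriv.symm

theorem Hsr_eq_Hmu {a q p : Fin 8 → ℝ} (hp : ∀ i : Fin 8, 2 ≤ (i : ℕ) → p i = a i) :
    Hsr q p = Hmu a (q 0) (q 1) (p 0) (p 1) := by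
  simp only [Hsr, Hmu, hp 2 (by decide), hp 3 (by decide), hp 4 (by decide),
    hp 5 (by decide), hp 6 (by decide), hp 7 (by decide)]

theorem update_apply_of_two_le {a p : Fin 8 → ℝ} (hp : ∀ i : Fin 8, 2 ≤ (i : ℕ) → p i = a i)
    {j : Fin 8} (hj : (j : ℕ) < 2) (w : ℝ) :
    ∀ i : Fin 8, 2 ≤ (i : ℕ) → update p j w i = a i := by
  intro i hi
  rw [update_of_ne (by omega)]
  exact hp i hi

/-- Along any solution of Hamilton's equations for `H_sR` on which the momenta
`p₁,…,p₆` take the constant values `a₁,…,a₆`, the projection `(x, y, p_x, p_y)`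
satisfies Hamilton's equations for the reduced Hamiltonian `H_μ`. -/
theorem stmt14 (q p : ℝ → Fin 8 → ℝ) (a : Fin 8 → ℝ)
    (hq : ∀ t (i : Fin 8), HasDerivAt (fun s => q s i)
      (fderiv ℝ (fun pp => Hsr (q t) pp) (p t) (Pi.single i 1)) t)
    (hp : ∀ t (i : Fin 8), HasDerivAt (fun s => p s i)
      (-(fderiv ℝ (fun qq => Hsr qq (p t)) (q t) (Pi.single i 1))) t)
    (ha : ∀ t : ℝ, ∀ i : Fin 8, 2 ≤ (i : ℕ) → p t i = a i) :
    ∀ t : ℝ,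
      HasDerivAt (fun s => q s 0)
        (deriv (fun w => Hmu a (q t 0) (q t 1) w (p t 1)) (p t 0)) t ∧
      HasDerivAt (fun s => q s 1)
        (deriv (fun w => Hmu a (q t 0) (q t 1) (p t 0) w) (p t 1)) t ∧
      HasDerivAt (fun s => p s 0)
        (-(deriv (fun w => Hmu a w (q t 1) (p t 0) (p t 1)) (q t 0))) t ∧
      HasDerivAt (fun s => p s 1)
        (-(deriv (fun w => Hmu a (q t 0) w (p t 0) (p t 1)) (q t 1))) t := by
  intro t
  refine ⟨(hq t 0).congr_deriv ?_, (hq t 1).congr_deriv ?_,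
    (hp t 0).congr_deriv (congrArg Neg.neg ?_), (hp t 1).congr_deriv (congrArg Neg.neg ?_)⟩
  all_goals
    rw [fderiv_apply_single_eq_deriv_update (by unfold Hsr; fun_prop)]
    congr 1 with w
  iterate 2 rw [Hsr_eq_Hmu (update_apply_of_two_le (ha t) (by decide) w)]; simp
  iterate 2 rw [Hsr_eq_Hmu (ha t)]; simp
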